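/- Let S be a semigroup that is a finite disjoint union of free monogenic subsemigroups N_a = ⟨a⟩ (a ∈ A). Fix a, b ∈ A and x ∈ S, and let T = { i ∈ ℕ₊ : a^i · x ∈ N_b }. If T is infinite, then there exist positive integers p and q such that the set P = { p + q·t : t ≥ 0 } is contained in T, p − q ∉ T (when p > q), and T \ P is a finite subset of {1, ..., p−1}. -/
import Mathlib


/-- `spow a n` is the `n`-th power of `a` in a semigroup, for `n ≥ 1`
(with the junk value `a` at `n = 0`). -/
def spow {S : Type*} [Semigroup S] (a : S) : ℕ → S
  | 0 => a
  | 1 => a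
  | (n + 2) => spow a (n + 1) * a

/-- The subsemigroup (as a set) generated by `a`: all positive powers of `a`. -/
def Nblock {S : Type*} [Semigroup S] (a : S) : Set S :=
  {x | ∃ i : ℕ, 1 ≤ i ∧ x = spow a i}


theorem spow_succ' {S : Type*} [Semigroup S] (a : S) (n : ℕ) (h : 1 ≤ n) :
    spow a (n + 1) = spow a n * a := by
  cases n with
  | zero => omega
  | succ m => rfl

theorem spow_add' {S : Type*} [Semigroup S] (a : S) (i j : ℕ) (hi : 1 ≤ i) (hj : 1 ≤ j) :
    spow a (i + j) = spow a i * spow a j := by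
  induction j with
  | zero => omega
  | succ k ih =>
    rcases Nat.eq_or_lt_of_le hj with h1 | h1
    · have hk : k = 0 := by omega
      subst hk
      rw [spow_succ' a i hi]; rfl
    · have hk : 1 ≤ k := by omega
      rw [show i + (k+1) = (i+k) + 1 by omega, spow_succ' a (i+k) (by omega),
        ih hk, spow_succ' a k hk, mul_assoc]

/-- numerical semigroup lemma -/
theorem num_lemma (D : Set ℕ) (h0 : 0 ∈ D) (hadd : ∀ d ∈ D, ∀ e ∈ D, d + e ∈ D)
    (d0 : ℕ) (hd0 : d0 ∈ D) (hd0pos : 0 < d0) :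
    ∃ g : ℕ, 0 < g ∧ (∀ d ∈ D, g ∣ d) ∧ ∃ N : ℕ, ∀ m : ℕ, N ≤ m → m * g ∈ D := by
  have hmul : ∀ n s, s ∈ D → n * s ∈ D := by
    intro n
    induction n with
    | zero => intro s hs; simpa using h0
    | succ k ih =>
      intro s hs
      have := hadd _ (ih s hs) _ hs
      rwa [show k * s + s = (k+1) * s by ring] at this
  have hGne : Set.Nonempty {d : ℕ | 0 < d ∧ ∃ s1 ∈ D, ∃ s2 ∈ D, s1 = s2 + d} :=
    ⟨d0, hd0pos, d0, hd0, 0, h0, (zero_add d0).symm⟩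
  set g := sInf {d : ℕ | 0 < d ∧ ∃ s1 ∈ D, ∃ s2 ∈ D, s1 = s2 + d} with hgdef
  have hgG := Nat.sInf_mem hGne
  rw [← hgdef] at hgG
  obtain ⟨hgpos, s1, hs1, s2, hs2, hseq⟩ := hgG
  have hdvd : ∀ s ∈ D, g ∣ s := by
    intro s hs
    by_contra hc
    have hr0 : 0 < s % g := Nat.pos_of_ne_zero (fun h' => hc (Nat.dvd_of_mod_eq_zero h'))
    have hrg : s % g < g := Nat.mod_lt _ hgpos
    have key : s + s / g * s2 = s / g * s1 + s % g := by
      calc s + s / g * s2 = g * (s / g) + s % g + s / g * s2 := by rw [Nat.div_add_mod]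
      _ = s / g * (s2 + g) + s % g := by ring
      _ = s / g * s1 + s % g := by rw [hseq]
    have hrG : s % g ∈ {d : ℕ | 0 < d ∧ ∃ s1 ∈ D, ∃ s2 ∈ D, s1 = s2 + d} :=
      ⟨hr0, s + s / g * s2, hadd _ hs _ (hmul _ _ hs2), s / g * s1, hmul _ _ hs1, key⟩
    have := Nat.sInf_le hrG
    omega
  obtain ⟨u, hu⟩ := hdvd s2 hs2
  refine ⟨g, hgpos, hdvd, u * u, ?_⟩
  intro m hm
  by_cases hu0 : u = 0
  · subst hu0
    have hs20 : s2 = 0 := by simpa using hu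
    have hg1 : g = s1 := by omega
    have := hmul m s1 hs1
    rwa [← hg1] at this
  · have hupos : 0 < u := Nat.pos_of_ne_zero hu0
    obtain ⟨qd, rd, hqr, hrlt⟩ : ∃ qd rd : ℕ, u * qd + rd = m ∧ rd < u :=
      ⟨m / u, m % u, Nat.div_add_mod m u, Nat.mod_lt _ hupos⟩
    have hq : u ≤ qd := by nlinarith
    have hle : rd ≤ qd := le_of_lt (lt_of_lt_of_le hrlt hq)
    have key : m * g = (qd - rd) * s2 + rd * s1 := by
      zify [hle]
      have hqrz : ((u : ℤ) * qd + rd) = m := by exact_mod_cast hqr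
      rw [hseq, hu]
      push_cast
      linear_combination (-(g : ℤ)) * hqrz
    rw [key]
    exact hadd _ (hmul _ _ hs2) _ (hmul _ _ hs1)
theorem stmt5 {S : Type*} [Semigroup S] {A : Type*} [Finite A] (gen : A → S)
    (hcover : ∀ x : S, ∃ a : A, x ∈ Nblock (gen a))
    (hfree : ∀ (a b : A) (i j : ℕ), 1 ≤ i → 1 ≤ j →
      spow (gen a) i = spow (gen b) j → a = b ∧ i = j)
    (a b : A) (x : S)
    (T : Set ℕ) (hT : T = {i : ℕ | 1 ≤ i ∧ spow (gen a) i * x ∈ Nblock (gen b)})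
    (hinf : T.Infinite) :
    ∃ p q : ℕ, 1 ≤ p ∧ 1 ≤ q ∧
      {m : ℕ | ∃ t : ℕ, m = p + q * t} ⊆ T ∧
      (q < p → p - q ∉ T) ∧
      (T \ {m : ℕ | ∃ t : ℕ, m = p + q * t}).Finite ∧
      T \ {m : ℕ | ∃ t : ℕ, m = p + q * t} ⊆ Set.Ico 1 p := by
  -- choose exponent function f
  have hex : ∀ i : ℕ, ∃ j : ℕ, i ∈ T → (1 ≤ j ∧ spow (gen a) i * x = spow (gen b) j) := by
    intro i
    by_cases hi : i ∈ T
    · rw [hT] at hi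
      obtain ⟨hi1, j, hj1, hj2⟩ := hi
      exact ⟨j, fun _ => ⟨hj1, hj2⟩⟩
    · exact ⟨1, fun h => absurd h hi⟩
  choose f hf using hex
  have hTsub : ∀ i ∈ T, 1 ≤ i := by
    intro i hi; rw [hT] at hi; exact hi.1
  have hTmem : ∀ i : ℕ, 1 ≤ i → ∀ j : ℕ, 1 ≤ j →
      spow (gen a) i * x = spow (gen b) j → i ∈ T := by
    intro i hi j hj hij
    rw [hT]; exact ⟨hi, j, hj, hij⟩
  -- minimal exponent
  have hTne : T.Nonempty := hinf.nonempty
  have himg : (f '' T).Nonempty := hTne.image f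
  obtain ⟨i0, hi0T, hi0f⟩ := Nat.sInf_mem himg
  have hmin : ∀ i ∈ T, f i0 ≤ f i := by
    intro i hi
    rw [hi0f]
    exact Nat.sInf_le ⟨i, hi, rfl⟩
  -- closure of T under adding differences from i0
  have Tclosed : ∀ i' ∈ T, i0 ≤ i' → ∀ i ∈ T, i + (i' - i0) ∈ T := by
    intro i' hi'T hle i hiT
    rcases Nat.eq_or_lt_of_le hle with heq | hlt
    · rw [← heq]; simpa using hiT
    · set d := i' - i0 with hd
      have hd1 : 1 ≤ d := by omega
      have hi01 : 1 ≤ i0 := hTsub i0 hi0T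
      have hi1 : 1 ≤ i := hTsub i hiT
      have key1 : spow (gen a) d * spow (gen b) (f i0) = spow (gen b) (f i') := by
        have hsplit : spow (gen a) i' = spow (gen a) d * spow (gen a) i0 := by
          rw [← spow_add' (gen a) d i0 hd1 hi01]
          congr 1
          omega
        calc spow (gen a) d * spow (gen b) (f i0)
            = spow (gen a) d * (spow (gen a) i0 * x) := by rw [(hf i0 hi0T).2]
          _ = (spow (gen a) d * spow (gen a) i0) * x := (mul_assoc _ _ _).symm
          _ = spow (gen a) i' * x := by rw [← hsplit]
          _ = spow (gen b) (f i') := (hf i' hi'T).2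
      have shift : ∀ k : ℕ, spow (gen a) d * spow (gen b) (f i0 + k)
          = spow (gen b) (f i' + k) := by
        intro k
        cases k with
        | zero => simpa using key1
        | succ k' =>
          have hk1 : 1 ≤ k' + 1 := by omega
          rw [spow_add' (gen b) (f i0) (k'+1) (hf i0 hi0T).1 hk1, ← mul_assoc, key1,
            ← spow_add' (gen b) (f i') (k'+1) (hf i' hi'T).1 hk1]
      obtain ⟨k, hk⟩ : ∃ k : ℕ, f i = f i0 + k := ⟨f i - f i0, by have := hmin i hiT; omega⟩
      have heq2 : spow (gen a) (i + d) * x = spow (gen b) (f i' + k) := by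
        calc spow (gen a) (i + d) * x
            = (spow (gen a) d * spow (gen a) i) * x := by
              rw [← spow_add' (gen a) d i hd1 hi1, Nat.add_comm d i]
          _ = spow (gen a) d * (spow (gen a) i * x) := mul_assoc _ _ _
          _ = spow (gen a) d * spow (gen b) (f i) := by rw [(hf i hiT).2]
          _ = spow (gen b) (f i' + k) := by rw [hk]; exact shift k
      exact hTmem (i + d) (by omega) _ (by have := (hf i' hi'T).1; omega) heq2
  -- the monoid D
  set D : Set ℕ := {d : ℕ | i0 + d ∈ T} with hD
  have h0D : 0 ∈ D := by simpa [hD] using hi0T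
  have hDadd : ∀ d ∈ D, ∀ e ∈ D, d + e ∈ D := by
    intro d hd e he
    have := Tclosed (i0 + e) he (by omega) (i0 + d) hd
    simpa [hD, Nat.add_sub_cancel_left, add_assoc] using this
  have hDT : ∀ i ∈ T, ∀ d ∈ D, i + d ∈ D → True := fun _ _ _ _ _ => trivial
  have hDTmem : ∀ i ∈ T, ∀ d ∈ D, i + d ∈ T := by
    intro i hi d hd
    have := Tclosed (i0 + d) hd (by omega) i hi
    simpa [Nat.add_sub_cancel_left] using this
  -- a positive element of D
  obtain ⟨i', hi'⟩ := (hinf.diff (Set.finite_Icc 0 i0)).nonempty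
  have hi'T : i' ∈ T := hi'.1
  have hi'gt : i0 < i' := by
    have := hi'.2
    simp only [Set.mem_Icc] at this
    omega
  have hd0D : (i' - i0) ∈ D := by
    simp only [hD, Set.mem_setOf_eq]
    rwa [Nat.add_sub_cancel' (le_of_lt hi'gt)]
  obtain ⟨g, hgpos, hgdvd, N, hN⟩ := num_lemma D h0D hDadd (i' - i0) hd0D (by omega)
  -- congruence: all elements of T are ≡ i0 mod g
  have Cge : ∀ i ∈ T, i0 ≤ i → g ∣ i - i0 := by
    intro i hi h
    refine hgdvd (i - i0) ?_
    simp only [hD, Set.mem_setOf_eq]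
    rwa [Nat.add_sub_cancel' h]
  have Clt : ∀ i ∈ T, i < i0 → g ∣ i0 - i := by
    intro i hi h
    set M := N + i0 with hM
    have hMD : M * g ∈ D := hN M (by omega)
    have hMg : i0 ≤ M * g := by
      have h5 : M ≤ M * g := Nat.le_mul_of_pos_right M hgpos
      omega
    have h1 : i + M * g ∈ T := hDTmem i hi _ hMD
    have h2 : g ∣ (i + M * g) - i0 := Cge _ h1 (by omega)
    have h3 : g ∣ M * g := ⟨M, mul_comm M g⟩
    have h4 : i0 - i = M * g - ((i + M * g) - i0) := by omega
    rw [h4]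
    exact Nat.dvd_sub h3 h2
  have Ccong : ∀ i ∈ T, ∀ j ∈ T, i ≤ j → g ∣ j - i := by
    intro i hi j hj hij
    rcases le_or_gt i0 i with h1 | h1 <;> rcases le_or_gt i0 j with h2 | h2
    · have d1 := Cge i hi h1
      have d2 := Cge j hj h2
      have : j - i = (j - i0) - (i - i0) := by omega
      rw [this]; exact Nat.dvd_sub d2 d1
    · omega
    · have d1 := Clt i hi h1
      have d2 := Cge j hj h2
      have : j - i = (j - i0) + (i0 - i) := by omega
      rw [this]; exact Nat.dvd_add d2 d1
    · have d1 := Clt i hi h1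
      have d2 := Clt j hj h2
      have : j - i = (i0 - i) - (i0 - j) := by omega
      rw [this]; exact Nat.dvd_sub d1 d2
  -- define p
  have hpne : Set.Nonempty {m : ℕ | m ∈ T ∧ ∀ t : ℕ, m + g * t ∈ T} := by
    refine ⟨i0 + N * g, ?_, ?_⟩
    · simpa using hDTmem i0 hi0T _ (hN N le_rfl)
    · intro t
      have := hDTmem i0 hi0T _ (hN (N + t) (by omega))
      have heq : i0 + N * g + g * t = i0 + (N + t) * g := by ring
      rwa [heq]
  set p := sInf {m : ℕ | m ∈ T ∧ ∀ t : ℕ, m + g * t ∈ T} with hpdef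
  have hpmem := Nat.sInf_mem hpne
  rw [← hpdef] at hpmem
  obtain ⟨hpT, hpAll⟩ := hpmem
  refine ⟨p, g, hTsub p hpT, hgpos, ?_, ?_, ?_, ?_⟩
  · rintro m ⟨t, rfl⟩
    exact hpAll t
  · intro hlt hmem
    have hps : p - g ∈ {m : ℕ | m ∈ T ∧ ∀ t : ℕ, m + g * t ∈ T} := by
      refine ⟨hmem, ?_⟩
      intro t
      cases t with
      | zero => simpa using hmem
      | succ t' =>
        have h1 : g * (t' + 1) = g * t' + g := by ring
        have h2 := hpAll t'
        have h3 : p - g + g * (t' + 1) = p + g * t' := by omega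
        rwa [h3]
    have := Nat.sInf_le hps
    rw [← hpdef] at this
    omega
  · apply (Set.finite_Ico 1 p).subset
    intro i hi
    obtain ⟨hiT, hiP⟩ := hi
    refine ⟨hTsub i hiT, ?_⟩
    by_contra hge
    push_neg at hge
    obtain ⟨t, ht⟩ := Ccong p hpT i hiT hge
    exact hiP ⟨t, by omega⟩
  · intro i hi
    obtain ⟨hiT, hiP⟩ := hi
    refine ⟨hTsub i hiT, ?_⟩
    by_contra hge
    push_neg at hge
    obtain ⟨t, ht⟩ := Ccong p hpT i hiT hge
    exact hiP ⟨t, by omega⟩
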